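/- Let M = ℂ⟨b,t⟩/((b+t)² − 1, (b−t)² − 1) (equivalently, the quotient by b² + t² − 1 and bt + tb), and let M₀ = ℂ[t̄]/(t̄² − 1). Then: (1) there is a well-defined unital algebra homomorphism Δ_L : M → M₀ ⊗ M with Δ_L(b) = 1 ⊗ b and Δ_L(t) = t̄ ⊗ t; (2) every element of M can be written as f(b) + t·g(b) for polynomials f, g ∈ ℂ[X]; (3) the fixed-point subalgebra {h ∈ M : Δ_L(h) = 1 ⊗ h} equals the (commutative polynomial) subalgebra of M generated by b. -/

import Mathlib

open scoped TensorProduct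

set_option maxHeartbeats 1000000
set_option synthInstance.maxHeartbeats 400000

noncomputable section
namespace Stmt12

/-- The free ℂ-algebra on the two generators `b`, `t`. -/
abbrev F : Type := FreeAlgebra ℂ (Fin 2)

/-- The generator `b`. -/
def b : F := FreeAlgebra.ι ℂ 0

/-- The generator `t`. -/
def t : F := FreeAlgebra.ι ℂ 1

/-- The relations `(b+t)² = 1`, `(b−t)² = 1`. -/
def rel : F → F → Prop := fun x y =>
  (x = (b + t) ^ 2 ∧ y = 1) ∨ (x = (b - t) ^ 2 ∧ y = 1)

/-- `M = ℂ⟨b,t⟩/((b+t)² − 1, (b−t)² − 1)`. -/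
abbrev M : Type := RingQuot rel

/-- The image of `b` in `M`. -/
def bb : M := RingQuot.mkAlgHom ℂ rel b

/-- The image of `t` in `M`. -/
def tt : M := RingQuot.mkAlgHom ℂ rel t

/-- `M₀ = ℂ[t̄]/(t̄² − 1)`. -/
abbrev M₀ : Type := Polynomial ℂ ⧸ Ideal.span {(Polynomial.X : Polynomial ℂ) ^ 2 - 1}

/-- The image of `t̄` in `M₀`. -/
def tbar : M₀ := Ideal.Quotient.mk _ Polynomial.X

/-- Characterization of the coaction `Δ_L`. -/
def IsCoactL (D : M →ₐ[ℂ] M₀ ⊗[ℂ] M) : Prop :=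
  D bb = 1 ⊗ₜ[ℂ] bb ∧ D tt = tbar ⊗ₜ[ℂ] tt


open Polynomial

lemma half_cancel {x y : M} (h : (2:ℂ) • x = (2:ℂ) • y) : x = y := by
  have := congrArg (fun z => (2⁻¹:ℂ) • z) h
  simpa [smul_smul, (by norm_num : (2⁻¹ * 2 : ℂ) = 1)] using this

lemma sq_add : (bb + tt) ^ 2 = 1 := by
  have h := RingQuot.mkAlgHom_rel ℂ (show rel ((b+t)^2) 1 from Or.inl ⟨rfl, rfl⟩)
  simpa [bb, tt, map_pow, map_add] using h

lemma sq_sub : (bb - tt) ^ 2 = 1 := by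
  have h := RingQuot.mkAlgHom_rel ℂ (show rel ((b-t)^2) 1 from Or.inr ⟨rfl, rfl⟩)
  simpa [bb, tt, map_pow, map_sub] using h

lemma ep : (bb + tt) ^ 2 = bb*bb + bb*tt + (tt*bb + tt*tt) := by
  rw [pow_two, add_mul, mul_add, mul_add]

lemma em : (bb - tt) ^ 2 = bb*bb - bb*tt - (tt*bb - tt*tt) := by
  rw [pow_two, sub_mul, mul_sub, mul_sub]

lemma hsq : bb ^ 2 + tt ^ 2 = 1 := by
  apply half_cancel
  rw [two_smul, two_smul, pow_two, pow_two]
  calc bb*bb + tt*tt + (bb*bb + tt*tt) = (bb+tt)^2 + (bb-tt)^2 := by rw [ep, em]; abel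
  _ = 1 + 1 := by rw [sq_add, sq_sub]

lemma hanti : bb * tt + tt * bb = 0 := by
  apply half_cancel
  rw [two_smul, smul_zero]
  calc bb*tt + tt*bb + (bb*tt + tt*bb) = (bb+tt)^2 - (bb-tt)^2 := by rw [ep, em]; abel
  _ = 0 := by rw [sq_add, sq_sub, sub_self]

lemma tbar_sq : tbar ^ 2 = 1 := by
  have h : (tbar ^ 2 - 1 : M₀) = 0 := by
    show (Ideal.Quotient.mk _ (X : ℂ[X])) ^ 2 - 1 = 0
    rw [← map_pow, ← map_one (Ideal.Quotient.mk _), ← map_sub,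
      Ideal.Quotient.eq_zero_iff_mem]
    exact Ideal.subset_span rfl
  exact sub_eq_zero.mp h

lemma tt_bb : tt * bb = -(bb * tt) := eq_neg_of_add_eq_zero_right hanti
lemma tt_sq : tt ^ 2 = 1 - bb ^ 2 := eq_sub_of_add_eq' hsq

-- Part 1 construction
def Dfree : F →ₐ[ℂ] M₀ ⊗[ℂ] M :=
  FreeAlgebra.lift ℂ ![(1 : M₀) ⊗ₜ[ℂ] bb, tbar ⊗ₜ[ℂ] tt]

lemma Dfree_b : Dfree b = (1 : M₀) ⊗ₜ[ℂ] bb := by simp [Dfree, b]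
lemma Dfree_t : Dfree t = tbar ⊗ₜ[ℂ] tt := by simp [Dfree, t]

lemma huv : (tbar ⊗ₜ[ℂ] tt) * ((1:M₀) ⊗ₜ[ℂ] bb) = -(((1:M₀) ⊗ₜ[ℂ] bb) * (tbar ⊗ₜ[ℂ] tt)) := by
  rw [Algebra.TensorProduct.tmul_mul_tmul, Algebra.TensorProduct.tmul_mul_tmul,
    mul_one, one_mul, ← TensorProduct.tmul_neg, tt_bb]

lemma hmulsum : bb * bb + tt * tt = 1 := by
  rw [← pow_two, ← pow_two]; exact hsq

lemma hsumsq : ((1:M₀) ⊗ₜ[ℂ] bb) * ((1:M₀) ⊗ₜ[ℂ] bb)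
    + (tbar ⊗ₜ[ℂ] tt) * (tbar ⊗ₜ[ℂ] tt) = 1 := by
  rw [Algebra.TensorProduct.tmul_mul_tmul, Algebra.TensorProduct.tmul_mul_tmul, one_mul]
  have h2 : tbar * tbar = 1 := by rw [← pow_two]; exact tbar_sq
  rw [h2, ← TensorProduct.tmul_add, hmulsum, Algebra.TensorProduct.one_def]

section GenericRing
variable {A : Type*} [Ring A]

lemma ring_sq_plus (u v : A) (h1 : v * u = -(u * v)) (h2 : u * u + v * v = 1) :
    (u + v) ^ 2 = 1 := by
  have e : (u + v) ^ 2 = u * u + v * v + (u * v + v * u) := by noncomm_ring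
  rw [e, h1, h2]
  simp

lemma ring_sq_minus (u v : A) (h1 : v * u = -(u * v)) (h2 : u * u + v * v = 1) :
    (u - v) ^ 2 = 1 := by
  have e : (u - v) ^ 2 = u * u + v * v - (u * v + v * u) := by noncomm_ring
  rw [e, h1, h2]
  simp

lemma ring_pow_anti (x y : A) (hc : x * y = -(y * x)) :
    ∀ n : ℕ, x ^ n * y = y * (-x) ^ n := by
  intro n
  induction n with
  | zero => simp
  | succ n ih =>
    rw [pow_succ, pow_succ]
    calc x ^ n * x * y = x ^ n * (x * y) := by rw [mul_assoc]
      _ = x ^ n * -(y * x) := by rw [hc]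
      _ = -(x ^ n * y * x) := by rw [mul_neg, mul_assoc]
      _ = -(y * (-x) ^ n * x) := by rw [ih]
      _ = y * ((-x) ^ n * -x) := by rw [mul_neg, mul_neg, mul_assoc]

end GenericRing

lemma plus_sq : (((1:M₀) ⊗ₜ[ℂ] bb) + (tbar ⊗ₜ[ℂ] tt)) ^ 2 = 1 := by
  exact ring_sq_plus ((1:M₀) ⊗ₜ[ℂ] bb) (tbar ⊗ₜ[ℂ] tt) huv hsumsq

lemma minus_sq : (((1:M₀) ⊗ₜ[ℂ] bb) - (tbar ⊗ₜ[ℂ] tt)) ^ 2 = 1 := by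
  exact ring_sq_minus ((1:M₀) ⊗ₜ[ℂ] bb) (tbar ⊗ₜ[ℂ] tt) huv hsumsq

def D : M →ₐ[ℂ] M₀ ⊗[ℂ] M :=
  RingQuot.liftAlgHom ℂ ⟨Dfree, by
    rintro x y (⟨rfl, rfl⟩ | ⟨rfl, rfl⟩)
    · rw [← Dfree.coe_toRingHom, map_pow, map_add, map_one, Dfree.coe_toRingHom, Dfree_b, Dfree_t, plus_sq]
    · rw [← Dfree.coe_toRingHom, map_pow, map_sub, map_one, Dfree.coe_toRingHom, Dfree_b, Dfree_t, minus_sq]⟩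

lemma D_bb : D bb = (1:M₀) ⊗ₜ[ℂ] bb := by
  rw [bb, D, RingQuot.liftAlgHom_mkAlgHom_apply]; exact Dfree_b

lemma D_tt : D tt = tbar ⊗ₜ[ℂ] tt := by
  rw [tt, D, RingQuot.liftAlgHom_mkAlgHom_apply]; exact Dfree_t

-- Part 2
lemma pow_anti : ∀ n : ℕ, bb ^ n * tt = tt * (-bb) ^ n :=
  ring_pow_anti bb tt (eq_neg_of_add_eq_zero_left hanti)

lemma aeval_anti (p : ℂ[X]) :
    Polynomial.aeval bb p * tt = tt * Polynomial.aeval (-bb) p := by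
  induction p using Polynomial.induction_on with
  | C a => simpa using Algebra.commutes a tt
  | add p q hp hq => rw [map_add, map_add, add_mul, mul_add, hp, hq]
  | monomial n a _ =>
    rw [map_mul, map_mul, aeval_C, aeval_C, map_pow, map_pow, aeval_X, aeval_X,
      mul_assoc, pow_anti, ← mul_assoc, Algebra.commutes, mul_assoc]

lemma aeval_neg_comp (p : ℂ[X]) :
    Polynomial.aeval bb (p.comp (-X)) = Polynomial.aeval (-bb) p := by
  rw [Polynomial.aeval_comp]; simp

lemma aeval_anti' (p : ℂ[X]) :
    Polynomial.aeval bb p * tt = tt * Polynomial.aeval bb (p.comp (-X)) := by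
  rw [aeval_anti, aeval_neg_comp]

lemma part2 : ∀ h : M, ∃ f g : ℂ[X],
    h = Polynomial.aeval bb f + tt * Polynomial.aeval bb g := by
  have main : ∀ a : F, ∃ f g : ℂ[X],
      RingQuot.mkAlgHom ℂ rel a = Polynomial.aeval bb f + tt * Polynomial.aeval bb g := by
    intro a
    induction a using FreeAlgebra.induction with
    | grade0 c => exact ⟨C c, 0, by simp⟩
    | grade1 i =>
      fin_cases i
      · exact ⟨X, 0, by simp [bb, b]⟩
      · exact ⟨0, 1, by simp [tt, t]⟩
    | add x y hx hy =>
      obtain ⟨f1, g1, e1⟩ := hx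
      obtain ⟨f2, g2, e2⟩ := hy
      exact ⟨f1 + f2, g1 + g2, by rw [map_add, e1, e2, map_add, map_add, mul_add]; abel⟩
    | mul x y hx hy =>
      obtain ⟨f1, g1, e1⟩ := hx
      obtain ⟨f2, g2, e2⟩ := hy
      refine ⟨f1 * f2 + (1 - X^2) * (g1.comp (-X) * g2), f1.comp (-X) * g2 + g1 * f2, ?_⟩
      rw [map_mul, e1, e2]
      set A := (Polynomial.aeval bb : ℂ[X] →ₐ[ℂ] M)
      have e2' : A f1 * (tt * A g2) = tt * A (f1.comp (-X) * g2) := by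
        rw [← mul_assoc, aeval_anti', mul_assoc, ← map_mul]
      have httA : tt * tt = A (1 - X ^ 2) := by
        rw [← sq, tt_sq]; simp [A]
      have e4 : (tt * A g1) * (tt * A g2) = A ((1 - X^2) * (g1.comp (-X) * g2)) := by
        calc (tt * A g1) * (tt * A g2) = tt * (A g1 * tt) * A g2 := by noncomm_ring
        _ = tt * (tt * A (g1.comp (-X))) * A g2 := by rw [aeval_anti']
        _ = (tt * tt) * (A (g1.comp (-X)) * A g2) := by noncomm_ring
        _ = A ((1 - X^2) * (g1.comp (-X) * g2)) := by rw [httA]; simp [map_mul, mul_assoc]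
      rw [add_mul, mul_add, mul_add, e2', e4]
      have e3 : tt * A g1 * A f2 = tt * A (g1 * f2) := by rw [mul_assoc, ← map_mul]
      rw [e3]
      simp only [map_add, map_mul, mul_add]
      abel
  intro h
  obtain ⟨a, ha⟩ := RingQuot.mkAlgHom_surjective ℂ rel h
  obtain ⟨f, g, e⟩ := main a
  exact ⟨f, g, by rw [← ha, e]⟩

-- evaluation functional on M₀
def ev (c : ℂ) (hc : c ^ 2 - 1 = 0) : M₀ →ₐ[ℂ] ℂ :=
  Ideal.Quotient.liftₐ _ (Polynomial.aeval c) (by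
    intro a ha
    rw [Ideal.mem_span_singleton] at ha
    obtain ⟨q, rfl⟩ := ha
    simp [hc])

lemma ev_tbar (c : ℂ) (hc : c ^ 2 - 1 = 0) : ev c hc tbar = c := by
  simp [ev, tbar]

def φ : M₀ →ₗ[ℂ] ℂ :=
  (2⁻¹ : ℂ) • ((ev 1 (by norm_num)).toLinearMap - (ev (-1) (by norm_num)).toLinearMap)

lemma φ_tbar : φ tbar = 1 := by
  simp [φ, ev_tbar]; norm_num

lemma φ_one : φ (1 : M₀) = 0 := by
  simp [φ]

def ψ : M₀ ⊗[ℂ] M →ₗ[ℂ] M :=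
  (TensorProduct.lid ℂ M).toLinearMap ∘ₗ TensorProduct.map φ LinearMap.id

lemma ψ_tmul (a : M₀) (m : M) : ψ (a ⊗ₜ[ℂ] m) = φ a • m := by
  simp [ψ]

theorem fixed_points_of_Z2_comeasuring :
    -- (1) the algebra homomorphism Δ_L exists (is well defined on M)
    (∃ D : M →ₐ[ℂ] M₀ ⊗[ℂ] M, IsCoactL D) ∧
    -- (2) every element of M has the form f(b) + t·g(b)
    (∀ h : M, ∃ f g : Polynomial ℂ,
      h = Polynomial.aeval bb f + tt * Polynomial.aeval bb g) ∧
    -- (3) the fixed-point subalgebra is the subalgebra generated by b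
    (∀ D : M →ₐ[ℂ] M₀ ⊗[ℂ] M, IsCoactL D →
      ∀ h : M, D h = 1 ⊗ₜ[ℂ] h ↔ h ∈ Algebra.adjoin ℂ ({bb} : Set M)) := by
  refine ⟨⟨D, D_bb, D_tt⟩, part2, ?_⟩
  intro E hE h
  constructor
  · intro hDh
    obtain ⟨f, g, rfl⟩ := part2 h
    have hf : E (Polynomial.aeval bb f) = (1:M₀) ⊗ₜ[ℂ] Polynomial.aeval bb f := by
      rw [← Polynomial.aeval_algHom_apply, hE.1,
        show ((1:M₀) ⊗ₜ[ℂ] bb) = Algebra.TensorProduct.includeRight bb from rfl,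
        Polynomial.aeval_algHom_apply]
      rfl
    have hg : E (tt * Polynomial.aeval bb g) = tbar ⊗ₜ[ℂ] (tt * Polynomial.aeval bb g) := by
      rw [map_mul, hE.2]
      have := hf
      have hg' : E (Polynomial.aeval bb g) = (1:M₀) ⊗ₜ[ℂ] Polynomial.aeval bb g := by
        rw [← Polynomial.aeval_algHom_apply, hE.1,
          show ((1:M₀) ⊗ₜ[ℂ] bb) = Algebra.TensorProduct.includeRight bb from rfl,
          Polynomial.aeval_algHom_apply]
        rfl
      rw [hg', Algebra.TensorProduct.tmul_mul_tmul, mul_one]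
    rw [map_add, hf, hg] at hDh
    have := congrArg ψ hDh
    rw [map_add, ψ_tmul, ψ_tmul, ψ_tmul, φ_one, φ_tbar, zero_smul, one_smul,
      zero_smul, zero_add] at this
    rw [this, add_zero]
    exact Polynomial.aeval_mem_adjoin_singleton ℂ bb
  · intro hmem
    induction hmem using Algebra.adjoin_induction with
    | mem x hx =>
      rcases hx with rfl
      exact hE.1
    | algebraMap r =>
      rw [AlgHom.commutes, Algebra.TensorProduct.algebraMap_apply,
        Algebra.algebraMap_eq_smul_one, Algebra.algebraMap_eq_smul_one,
        TensorProduct.smul_tmul]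
    | add x y _ _ hx hy => rw [map_add, hx, hy, TensorProduct.tmul_add]
    | mul x y _ _ hx hy =>
      rw [map_mul, hx, hy, Algebra.TensorProduct.tmul_mul_tmul, one_mul]


end Stmt12
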